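/- arXiv:2511.23223 — 7 statements merged into one kernel-verified Lean document; each statement's English description precedes it below -/
import Mathlib

section
/- For every non-negative integer r, there do not exist non-negative integers x, y, z, w such that x² + y² + z² + w² = 4^(2r+1)·6 and 3x + 10y ∈ 𝒮. -/
/-!
A square is `0`, `1` or `4` modulo `8`, so four squares can only add up to a multiple of `8` when
all four are even. Since `4 ^ (2r+1) · 6 = 16 ^ r · 24`, a representation for `r + 1` therefore has
all of `x, y, z, w` divisible by `4`. Then the square `3x + 10y` is divisible by `4`, so dividing
`x, y, z, w` by `4` and the square root by `2` gives a representation for `r`. The case `r = 0`,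
sum `24`, is a finite check.
-/

theorem two_dvd_of_eight_dvd_sq_add_sq_add_sq_add_sq {x y z w : ℕ}
    (h : 8 ∣ x ^ 2 + y ^ 2 + z ^ 2 + w ^ 2) : 2 ∣ x ∧ 2 ∣ y ∧ 2 ∣ z ∧ 2 ∣ w := by
  have even_of_mod_eight : ∀ a b c d : ZMod 8, a ^ 2 + b ^ 2 + c ^ 2 + d ^ 2 = 0 →
      2 ∣ a.val ∧ 2 ∣ b.val ∧ 2 ∣ c.val ∧ 2 ∣ d.val := by
    decide
  rw [← ZMod.natCast_eq_zero_iff] at h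
  push_cast at h
  have two_dvd_eight : 2 ∣ 8 := by norm_num
  simpa only [ZMod.val_natCast, Nat.dvd_mod_iff two_dvd_eight] using even_of_mod_eight _ _ _ _ h

theorem four_dvd_of_sq_add_sq_add_sq_add_sq_eq_sixteen_mul {x y z w n : ℕ}
    (h : x ^ 2 + y ^ 2 + z ^ 2 + w ^ 2 = 16 * n) (hn : Even n) :
    4 ∣ x ∧ 4 ∣ y ∧ 4 ∣ z ∧ 4 ∣ w := by
  obtain ⟨⟨a, rfl⟩, ⟨b, rfl⟩, ⟨c, rfl⟩, ⟨d, rfl⟩⟩ :=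
    two_dvd_of_eight_dvd_sq_add_sq_add_sq_add_sq ⟨2 * n, by rw [h]; ring⟩
  obtain ⟨m, rfl⟩ := hn
  have h8 : 8 ∣ a ^ 2 + b ^ 2 + c ^ 2 + d ^ 2 := ⟨m, by linarith⟩
  obtain ⟨⟨a, rfl⟩, ⟨b, rfl⟩, ⟨c, rfl⟩, ⟨d, rfl⟩⟩ :=
    two_dvd_of_eight_dvd_sq_add_sq_add_sq_add_sq h8
  exact ⟨⟨a, by ring⟩, ⟨b, by ring⟩, ⟨c, by ring⟩, ⟨d, by ring⟩⟩

set_option synthInstance.maxSize 1000 in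
theorem not_exists_sq_add_sq_add_sq_add_sq_eq_24 :
    ¬ ∃ x y z w k : ℕ, x ^ 2 + y ^ 2 + z ^ 2 + w ^ 2 = 24 ∧ 3 * x + 10 * y = k ^ 2 := by
  have check : ∀ x < (5 : ℕ), ∀ y < (5 : ℕ), ∀ z < (5 : ℕ), ∀ w < (5 : ℕ), ∀ k < (8 : ℕ),
      x ^ 2 + y ^ 2 + z ^ 2 + w ^ 2 = 24 → 3 * x + 10 * y ≠ k ^ 2 := by
    decide
  rintro ⟨x, y, z, w, k, hsum, hk⟩
  have hx : x < 5 := by nlinarith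
  have hy : y < 5 := by nlinarith
  exact check x hx y hy z (by nlinarith) w (by nlinarith) k (by nlinarith) hsum hk

theorem not_exists_sq_add_sq_add_sq_add_sq_eq_sixteen_pow_mul_24 (r : ℕ) :
    ¬ ∃ x y z w k : ℕ, x ^ 2 + y ^ 2 + z ^ 2 + w ^ 2 = 16 ^ r * 24 ∧ 3 * x + 10 * y = k ^ 2 := by
  induction r with
  | zero => simpa using not_exists_sq_add_sq_add_sq_add_sq_eq_24
  | succ r ih =>
    rintro ⟨x, y, z, w, k, hsum, hk⟩
    have hsum16 : x ^ 2 + y ^ 2 + z ^ 2 + w ^ 2 = 16 * (16 ^ r * 24) := by rw [hsum]; ring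
    obtain ⟨⟨a, rfl⟩, ⟨b, rfl⟩, ⟨c, rfl⟩, ⟨d, rfl⟩⟩ :=
      four_dvd_of_sq_add_sq_add_sq_add_sq_eq_sixteen_mul hsum16 ⟨16 ^ r * 12, by ring⟩
    have hk4 : 2 ^ 2 ∣ k ^ 2 := ⟨3 * a + 10 * b, by rw [← hk]; ring⟩
    obtain ⟨l, rfl⟩ := (Nat.pow_dvd_pow_iff two_ne_zero).mp hk4
    exact ih ⟨a, b, c, d, l, by linarith, by linarith⟩

/-- For every non-negative integer `r`, there do not exist non-negative integers
`x, y, z, w` such that `x² + y² + z² + w² = 4^(2r+1)·6` and `3x + 10y` is a square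
of an integer. -/
theorem no_representation_four_power_six (r : ℕ) :
    ¬ ∃ x y z w : ℕ, x ^ 2 + y ^ 2 + z ^ 2 + w ^ 2 = 4 ^ (2 * r + 1) * 6 ∧
      ∃ m : ℤ, (3 * x + 10 * y : ℤ) = m ^ 2 := by
  rintro ⟨x, y, z, w, hsum, m, hm⟩
  have hpow : 4 ^ (2 * r + 1) * 6 = 16 ^ r * 24 := by rw [pow_succ, pow_mul]; ring
  refine not_exists_sq_add_sq_add_sq_add_sq_eq_sixteen_pow_mul_24 r
    ⟨x, y, z, w, m.natAbs, hsum.trans hpow, ?_⟩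
  zify
  rw [sq_abs, hm]
end

section
/- Let a, b, c, d, m, n be non-negative real numbers with a² + b² + c² + d² ≠ 0, and suppose x, y, z, w are real numbers satisfying x² + y² + z² + w² = n and ax + by + cz + dw = m. If m ≥ √((a² + b² + c² + d² − min({a², b², c², d²} \ {0}))·n), where min({a², b², c², d²} \ {0}) denotes the smallest nonzero value among a², b², c², d², then all four numbers ax, by, cz, dw are non-negative. -/
/-!
If `a i * x i < 0`, the remaining part `∑_{j ≠ i} a j * x j = m - a i * x i` of the linear form
exceeds `m ≥ 0`, while Cauchy–Schwarz bounds its square by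
`(∑ a² - a i²) (n - x i²) ≤ (∑ a² - μ) n ≤ m²`, because `a i ≠ 0` forces `μ ≤ a i²`
for the smallest nonzero square `μ`.
-/

open Finset

namespace SunPositivity

variable {ι : Type*} [Fintype ι] [DecidableEq ι]

theorem sq_sum_mul_erase_le (a x : ι → ℝ) (i : ι) :
    (∑ j ∈ univ.erase i, a j * x j) ^ 2 ≤
      (∑ j, a j ^ 2 - a i ^ 2) * (∑ j, x j ^ 2 - x i ^ 2) := by
  simp only [← sum_erase_eq_sub (mem_univ i)]
  exact sum_mul_sq_le_sq_mul_sq _ _ _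

theorem mul_nonneg_of_sum_sq_sub_mul_le (a x : ι → ℝ) (i : ι) {μ m : ℝ} (hm : 0 ≤ m)
    (hlin : ∑ j, a j * x j = m) (hμ : a i ≠ 0 → μ ≤ a i ^ 2)
    (hge : (∑ j, a j ^ 2 - μ) * ∑ j, x j ^ 2 ≤ m ^ 2) : 0 ≤ a i * x i := by
  by_contra! hneg
  have hμi : μ ≤ a i ^ 2 := hμ (left_ne_zero_of_mul hneg.ne)
  have hrest : ∑ j ∈ univ.erase i, a j * x j = m - a i * x i := by
    rw [← hlin, sum_erase_eq_sub (mem_univ i)]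
  have hA : 0 ≤ ∑ j, a j ^ 2 - a i ^ 2 := by
    rw [← sum_erase_eq_sub (mem_univ i)]; positivity
  have : m ^ 2 < m ^ 2 := calc
    m ^ 2 < (m - a i * x i) ^ 2 := by nlinarith
    _ ≤ (∑ j, a j ^ 2 - a i ^ 2) * (∑ j, x j ^ 2 - x i ^ 2) :=
      hrest ▸ sq_sum_mul_erase_le a x i
    _ ≤ (∑ j, a j ^ 2 - a i ^ 2) * ∑ j, x j ^ 2 := by
      gcongr; exact sub_le_self _ (sq_nonneg _)
    _ ≤ (∑ j, a j ^ 2 - μ) * ∑ j, x j ^ 2 := by gcongr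
    _ ≤ m ^ 2 := hge
  exact lt_irrefl _ this

theorem mul_nonneg_of_sqrt_le (a x : ι → ℝ) {m : ℝ} (hlin : ∑ j, a j * x j = m)
    (hge : √((∑ j, a j ^ 2 - sInf (Set.range (fun j ↦ a j ^ 2) \ {0})) * ∑ j, x j ^ 2) ≤ m)
    (i : ι) : 0 ≤ a i * x i := by
  obtain ⟨hm, hsq⟩ := Real.sqrt_le_iff.1 hge
  refine mul_nonneg_of_sum_sq_sub_mul_le a x i hm hlin (fun hai ↦ ?_) hsq
  exact csInf_le ((Set.finite_range _).sdiff).bddBelow ⟨⟨i, rfl⟩, pow_ne_zero 2 hai⟩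

end SunPositivity

theorem sun_positivity_lemma_general (a b c d m n x y z w : ℝ)
    (hsum : x ^ 2 + y ^ 2 + z ^ 2 + w ^ 2 = n)
    (hlin : a * x + b * y + c * z + d * w = m)
    (hge : m ≥ Real.sqrt ((a ^ 2 + b ^ 2 + c ^ 2 + d ^ 2 -
      sInf (({a ^ 2, b ^ 2, c ^ 2, d ^ 2} : Set ℝ) \ {0})) * n)) :
    0 ≤ a * x ∧ 0 ≤ b * y ∧ 0 ≤ c * z ∧ 0 ≤ d * w := by
  have hrange : Set.range (fun j ↦ ![a, b, c, d] j ^ 2) = {a ^ 2, b ^ 2, c ^ 2, d ^ 2} := by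
    ext t; simp [Fin.exists_fin_succ, eq_comm]
  have key := SunPositivity.mul_nonneg_of_sqrt_le ![a, b, c, d] ![x, y, z, w]
    (by simpa [Fin.sum_univ_four] using hlin)
    (by simpa [Fin.sum_univ_four, hrange, hsum] using hge)
  exact ⟨key 0, key 1, key 2, key 3⟩

/-- Sun's positivity lemma: if `a, b, c, d, m, n` are non-negative reals with
`a² + b² + c² + d² ≠ 0`, and `x, y, z, w` are reals with `x² + y² + z² + w² = n` and
`ax + by + cz + dw = m`, and if
`m ≥ √((a² + b² + c² + d² − min({a², b², c², d²} \ {0}))·n)`, then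
`ax, by, cz, dw` are all non-negative. -/
theorem sun_positivity_lemma (a b c d m n x y z w : ℝ)
    (ha : 0 ≤ a) (hb : 0 ≤ b) (hc : 0 ≤ c) (hd : 0 ≤ d) (hm : 0 ≤ m) (hn : 0 ≤ n)
    (habcd : a ^ 2 + b ^ 2 + c ^ 2 + d ^ 2 ≠ 0)
    (hsum : x ^ 2 + y ^ 2 + z ^ 2 + w ^ 2 = n)
    (hlin : a * x + b * y + c * z + d * w = m)
    (hge : m ≥ Real.sqrt ((a ^ 2 + b ^ 2 + c ^ 2 + d ^ 2 -
      sInf (({a ^ 2, b ^ 2, c ^ 2, d ^ 2} : Set ℝ) \ {0})) * n)) :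
    0 ≤ a * x ∧ 0 ≤ b * y ∧ 0 ≤ c * z ∧ 0 ≤ d * w :=
  sun_positivity_lemma_general a b c d m n x y z w hsum hlin hge
end

section
/- Let z be a nonzero element of the 2-adic field ℚ₂. Then z is a norm from ℚ₂(√−1), i.e., z = x² + y² for some x, y ∈ ℚ₂, if and only if z = 2^δ · u for some integer δ and some unit u of the ring ℤ₂ of 2-adic integers satisfying u ≡ 1 (mod 4ℤ₂). -/
/-!
Order the terms so that `‖y‖ ≤ ‖x‖` and write `x² + y² = x² (1 + b²)` with `b = y / x ∈ ℤ₂`.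
Squares of units of `ℤ₂` are `≡ 1 (mod 8)`, so `x² = 2^(2m) u` with `u ≡ 1 (mod 4)`, while
`1 + b²` is `1 + 4c²` for even `b` and `2 (1 + 4d)` for odd `b`; numbers of the form
`2^δ u`, `u ≡ 1 (mod 4)`, are closed under products. Conversely a unit `u ≡ 1 (mod 4)` is
`≡ 1` or `5 (mod 8)`, so by Hensel's lemma `u` or `u - 4` is a square and `u = s² + t²`;
powers of two are sums of two squares because `2 = 1² + 1²`, and sums of two squares are
closed under products.
-/

namespace PadicInt

variable {p : ℕ} [Fact p.Prime]

@[simp, norm_cast]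
theorem coe_ofNat (n : ℕ) [n.AtLeastTwo] : ((ofNat(n) : ℤ_[p]) : ℚ_[p]) = ofNat(n) := rfl

theorem isUnit_of_dvd_sub_one {u : ℤ_[p]} (h : (p : ℤ_[p]) ∣ u - 1) : IsUnit u := by
  refine IsLocalRing.isUnit_of_mem_nonunits_one_sub_self u ?_
  rwa [← IsLocalRing.mem_maximalIdeal, maximalIdeal_eq_span_p, Ideal.mem_span_singleton,
    ← neg_sub, dvd_neg]

theorem two_dvd_or_two_dvd_sub_one (x : ℤ_[2]) : 2 ∣ x ∨ 2 ∣ x - 1 := by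
  obtain ⟨n, hn, hx⟩ := exists_mem_range (p := 2) x
  rw [maximalIdeal_eq_span_p, Ideal.mem_span_singleton] at hx
  interval_cases n <;> simp_all

theorem two_dvd_sub_one_of_isUnit {a : ℤ_[2]} (ha : IsUnit a) : 2 ∣ a - 1 :=
  (two_dvd_or_two_dvd_sub_one a).resolve_left fun h2 =>
    prime_p.not_isUnit (isUnit_of_dvd_unit (by exact_mod_cast h2) ha)

theorem two_dvd_mul_add_one (x : ℤ_[2]) : 2 ∣ x * (x + 1) := by
  rcases two_dvd_or_two_dvd_sub_one x with h | h
  · exact h.mul_right _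
  · rw [show x + 1 = x - 1 + 2 by ring]
    exact (dvd_add h (dvd_refl 2)).mul_left _

theorem eight_dvd_sq_sub_one {a : ℤ_[2]} (ha : IsUnit a) : 8 ∣ a ^ 2 - 1 := by
  obtain ⟨c, hc⟩ := two_dvd_sub_one_of_isUnit ha
  obtain ⟨d, hd⟩ := two_dvd_mul_add_one c
  exact ⟨d, by linear_combination (a + 1 + 2 * c) * hc + 4 * hd⟩

theorem eight_dvd_sub_one_or_sub_five {u : ℤ_[2]} (h : 4 ∣ u - 1) : 8 ∣ u - 1 ∨ 8 ∣ u - 5 := by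
  obtain ⟨k, hk⟩ := h
  rcases two_dvd_or_two_dvd_sub_one k with ⟨c, hc⟩ | ⟨c, hc⟩
  · exact .inl ⟨c, by linear_combination hk + 4 * hc⟩
  · exact .inr ⟨c, by linear_combination hk + 4 * hc⟩

theorem isSquare_of_eight_dvd_sub_one {v : ℤ_[2]} (h : 8 ∣ v - 1) : IsSquare v := by
  obtain ⟨k, hk⟩ := h
  have h2 : ‖(2 : ℤ_[2])‖ = 2⁻¹ := by simpa using norm_p (p := 2)
  have hval : (Polynomial.X ^ 2 - Polynomial.C v).aeval (1 : ℤ_[2]) = -(2 ^ 3 * k) := by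
    simp only [map_sub, map_pow, Polynomial.aeval_X, Polynomial.aeval_C, one_pow]
    linear_combination -hk
  have hder : (Polynomial.X ^ 2 - Polynomial.C v).derivative.aeval (1 : ℤ_[2]) = 2 := by
    norm_num
  have hnorm : ‖(Polynomial.X ^ 2 - Polynomial.C v).aeval (1 : ℤ_[2])‖ <
      ‖(Polynomial.X ^ 2 - Polynomial.C v).derivative.aeval (1 : ℤ_[2])‖ ^ 2 := by
    rw [hval, hder, norm_neg, norm_mul, norm_pow, h2]
    calc (2⁻¹ : ℝ) ^ 3 * ‖k‖ ≤ 2⁻¹ ^ 3 := mul_le_of_le_one_right (by norm_num) (norm_le_one k)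
      _ < 2⁻¹ ^ 2 := by norm_num
  obtain ⟨s, hs, -⟩ := hensels_lemma hnorm
  exact ⟨s, by simpa [sub_eq_zero, sq, eq_comm] using hs⟩

theorem exists_sq_add_sq_of_four_dvd_sub_one {u : ℤ_[2]} (h : 4 ∣ u - 1) :
    ∃ s t : ℤ_[2], u = s ^ 2 + t ^ 2 := by
  rcases eight_dvd_sub_one_or_sub_five h with h1 | h5
  · obtain ⟨s, hs⟩ := isSquare_of_eight_dvd_sub_one h1
    exact ⟨s, 0, by rw [hs]; ring⟩
  · obtain ⟨s, hs⟩ := isSquare_of_eight_dvd_sub_one (v := u - 4) (by convert h5 using 1; ring)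
    exact ⟨s, 2, by linear_combination hs⟩

end PadicInt

theorem Padic.exists_eq_zpow_mul_unit {p : ℕ} [Fact p.Prime] {x : ℚ_[p]} (hx : x ≠ 0) :
    ∃ (n : ℤ) (u : ℤ_[p]ˣ), x = (p : ℚ_[p]) ^ n * ((u : ℤ_[p]) : ℚ_[p]) := by
  have hu : ‖x * (p : ℚ_[p]) ^ (-x.valuation)‖ = 1 := by
    rw [norm_mul, norm_eq_zpow_neg_valuation hx, norm_p_zpow,
      ← zpow_add₀ (mod_cast (Fact.out : p.Prime).ne_zero)]
    simp
  refine ⟨x.valuation, PadicInt.mkUnits hu, ?_⟩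
  rw [PadicInt.mkUnits_eq, mul_left_comm, ← zpow_add₀ (NeZero.ne _)]
  simp

theorem exists_two_zpow_eq_sq_add_sq {K : Type*} [Field K] [NeZero (2 : K)] (n : ℤ) :
    ∃ x y : K, (2 : K) ^ n = x ^ 2 + y ^ 2 := by
  obtain ⟨c, rfl | rfl⟩ := n.even_or_odd'
  · exact ⟨2 ^ c, 0, by rw [mul_comm 2 c, zpow_mul, zpow_ofNat]; ring⟩
  · refine ⟨2 ^ c, 2 ^ c, ?_⟩
    rw [zpow_add_one₀ two_ne_zero, mul_comm 2 c, zpow_mul, zpow_ofNat]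
    ring

def IsTwoZPowMulOneModFour (z : ℚ_[2]) : Prop :=
  ∃ (δ : ℤ) (u : ℤ_[2]ˣ),
    z = (2 : ℚ_[2]) ^ δ * ((u : ℤ_[2]) : ℚ_[2]) ∧ (4 : ℤ_[2]) ∣ (u : ℤ_[2]) - 1

namespace IsTwoZPowMulOneModFour

theorem mul {z w : ℚ_[2]} (hz : IsTwoZPowMulOneModFour z) (hw : IsTwoZPowMulOneModFour w) :
    IsTwoZPowMulOneModFour (z * w) := by
  obtain ⟨δ, u, rfl, hu⟩ := hz
  obtain ⟨ε, v, rfl, hv⟩ := hw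
  refine ⟨δ + ε, u * v, ?_, ?_⟩
  · rw [zpow_add₀ two_ne_zero]
    push_cast
    ring
  · rw [Units.val_mul, show (u * v : ℤ_[2]) - 1 = u * (v - 1) + (u - 1) by ring]
    exact dvd_add (hv.mul_left _) hu

theorem of_four_dvd_sub_one (n : ℤ) {v : ℤ_[2]} (hv : 4 ∣ v - 1) :
    IsTwoZPowMulOneModFour (2 ^ n * v) := by
  have hunit : IsUnit v := PadicInt.isUnit_of_dvd_sub_one (dvd_trans ⟨2, by norm_num⟩ hv)
  exact ⟨n, hunit.unit, by rw [hunit.unit_spec], by rwa [hunit.unit_spec]⟩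

theorem sq {x : ℚ_[2]} (hx : x ≠ 0) : IsTwoZPowMulOneModFour (x ^ 2) := by
  obtain ⟨n, u, rfl⟩ := Padic.exists_eq_zpow_mul_unit hx
  have h := of_four_dvd_sub_one (2 * n)
    (dvd_trans ⟨2, by norm_num⟩ (PadicInt.eight_dvd_sq_sub_one u.isUnit))
  convert h using 1
  rw [mul_comm 2 n, zpow_mul, zpow_ofNat]
  push_cast
  ring

theorem one_add_sq (b : ℤ_[2]) : IsTwoZPowMulOneModFour (1 + (b : ℚ_[2]) ^ 2) := by
  rcases PadicInt.two_dvd_or_two_dvd_sub_one b with ⟨c, rfl⟩ | hb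
  · convert of_four_dvd_sub_one 0 (v := 1 + 4 * c ^ 2) ⟨c ^ 2, by ring⟩ using 1
    push_cast
    ring
  · obtain ⟨d, hd⟩ := PadicInt.eight_dvd_sq_sub_one (PadicInt.isUnit_of_dvd_sub_one (p := 2) hb)
    convert of_four_dvd_sub_one 1 (v := 1 + 4 * d) ⟨d, by ring⟩ using 1
    rw [← PadicInt.coe_pow, sub_eq_iff_eq_add'.mp hd]
    push_cast
    ring

theorem sq_add_sq {x y : ℚ_[2]} (hx : x ≠ 0) (hxy : ‖y‖ ≤ ‖x‖) :
    IsTwoZPowMulOneModFour (x ^ 2 + y ^ 2) := by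
  have hb : ‖y / x‖ ≤ 1 := by
    rw [norm_div]
    exact div_le_one_of_le₀ hxy (norm_nonneg x)
  convert (sq hx).mul (one_add_sq ⟨y / x, hb⟩) using 1
  field_simp

end IsTwoZPowMulOneModFour

/-- Let `z` be a nonzero element of `ℚ₂`. Then `z = x² + y²` for some `x, y ∈ ℚ₂`
(i.e., `z` is a norm from `ℚ₂(√−1)`) if and only if `z = 2^δ · u` for some integer `δ`
and some unit `u` of `ℤ₂` with `u ≡ 1 (mod 4ℤ₂)`. -/
theorem norm_from_Q2_adjoin_i_iff (z : ℚ_[2]) (hz : z ≠ 0) :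
    (∃ x y : ℚ_[2], z = x ^ 2 + y ^ 2) ↔
      ∃ (δ : ℤ) (u : ℤ_[2]ˣ), z = (2 : ℚ_[2]) ^ δ * ((u : ℤ_[2]) : ℚ_[2]) ∧
        (4 : ℤ_[2]) ∣ ((u : ℤ_[2]) - 1) := by
  constructor
  · rintro ⟨x, y, rfl⟩
    rcases le_total ‖y‖ ‖x‖ with hxy | hyx
    · exact IsTwoZPowMulOneModFour.sq_add_sq (by rintro rfl; simp_all) hxy
    · rw [add_comm]
      exact IsTwoZPowMulOneModFour.sq_add_sq (by rintro rfl; simp_all) hyx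
  · rintro ⟨δ, u, rfl, hu⟩
    obtain ⟨a, b, hab⟩ := exists_two_zpow_eq_sq_add_sq (K := ℚ_[2]) δ
    obtain ⟨s, t, hst⟩ := PadicInt.exists_sq_add_sq_of_four_dvd_sub_one hu
    obtain ⟨x, y, hxy⟩ := sq_add_sq_mul hab (congrArg ((↑) : ℤ_[2] → ℚ_[2]) hst)
    exact ⟨x, y, hxy⟩
end

section
/- Let q be an odd prime and let c be a unit of the ring ℤ_q of q-adic integers. Then every element t ∈ ℤ_q can be written as t = x² + c·y² + c·z² with x, y, z ∈ ℤ_q. -/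
/-!
Reduce modulo `q`: over the finite field `𝔽_q` of odd order every element is of the form
`x₀² + c̄ y₀²`, by counting the values of the two quadratics. Choosing this for `t - c` and lifting
`x₀, y₀` to `x, y ∈ ℤ_q`, the element `u = (t - x² - c y²) / c` reduces to `1`, and a principal unit
of `ℤ_q` is a square by Hensel's lemma, since `2` is a unit for odd `q`.
-/

open Polynomial

theorem FiniteField.exists_sq_add_mul_sq {F : Type*} [Field F] [Fintype F] (hF : ringChar F ≠ 2)
    {d : F} (hd : d ≠ 0) (a : F) : ∃ x y : F, x ^ 2 + d * y ^ 2 = a := by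
  obtain ⟨x, y, hxy⟩ := FiniteField.exists_root_sum_quadratic
    (f := X ^ 2) (g := C d * X ^ 2 + C 0 * X + C (-a))
    (degree_X_pow 2) (degree_quadratic hd) (odd_card_of_char_ne_two hF)
  refine ⟨x, y, ?_⟩
  simp only [eval_add, eval_mul, eval_pow, eval_X, eval_C, zero_mul, add_zero] at hxy
  linear_combination hxy

namespace PadicInt

variable {p : ℕ} [Fact p.Prime]

theorem norm_two_eq_one (hp : p ≠ 2) : ‖(2 : ℤ_[p])‖ = 1 := by
  have h := norm_natCast_eq_one_iff (p := p) (n := 2)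
  push_cast at h
  exact h.2 ((Nat.coprime_primes Fact.out Nat.prime_two).2 hp)

theorem exists_sq_eq_of_toZMod_eq_one (hp : p ≠ 2) {u : ℤ_[p]} (hu : toZMod u = 1) :
    ∃ z : ℤ_[p], z ^ 2 = u := by
  have hu' : ‖1 - u‖ < 1 := by
    rw [norm_lt_one_iff_dvd, ← Ideal.mem_span_singleton, ← maximalIdeal_eq_span_p, ← ker_toZMod,
      RingHom.mem_ker, map_sub, map_one, hu, sub_self]
  have hnorm : ‖(X ^ 2 - C u).aeval (1 : ℤ_[p])‖ <
      ‖(X ^ 2 - C u).derivative.aeval (1 : ℤ_[p])‖ ^ 2 := by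
    simpa [one_add_one_eq_two, norm_two_eq_one hp] using hu'
  obtain ⟨z, hz, -⟩ := hensels_lemma hnorm
  exact ⟨z, sub_eq_zero.mp (by simpa using hz)⟩

end PadicInt

/-- Let `q` be an odd prime and `c` a unit of `ℤ_q`. Then every `t ∈ ℤ_q` can be written
as `t = x² + c·y² + c·z²` with `x, y, z ∈ ℤ_q`. -/
theorem universal_ternary_odd_prime (q : ℕ) [Fact q.Prime] (hq : Odd q)
    (c : ℤ_[q]ˣ) (t : ℤ_[q]) :
    ∃ x y z : ℤ_[q], t = x ^ 2 + (c : ℤ_[q]) * y ^ 2 + (c : ℤ_[q]) * z ^ 2 := by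
  open PadicInt in
  have hq2 : q ≠ 2 := by rintro rfl; exact Nat.not_odd_iff_even.2 even_two hq
  have hchar : ringChar (ZMod q) ≠ 2 := by rwa [ZMod.ringChar_zmod_n]
  obtain ⟨x₀, y₀, hxy⟩ := FiniteField.exists_sq_add_mul_sq hchar
    (c.isUnit.map toZMod).ne_zero (toZMod (t - c))
  obtain ⟨x, rfl⟩ := ZMod.ringHom_surjective toZMod x₀
  obtain ⟨y, rfl⟩ := ZMod.ringHom_surjective toZMod y₀
  set A := t - x ^ 2 - c * y ^ 2
  have hinv : toZMod (c : ℤ_[q]) * toZMod (↑c⁻¹ : ℤ_[q]) = 1 := by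
    rw [← map_mul, Units.mul_inv, map_one]
  obtain ⟨z, hz⟩ := exists_sq_eq_of_toZMod_eq_one hq2 (u := A * ↑c⁻¹) <| by
    simp only [A, map_mul, map_sub, map_pow] at hxy ⊢
    linear_combination (-toZMod (↑c⁻¹ : ℤ_[q])) * hxy + hinv
  exact ⟨x, y, z, by linear_combination (-(c : ℤ_[q])) * hz - A * c.mul_inv⟩
end

section
/- Let c be a unit of the ring ℤ₂ of 2-adic integers with c ≡ 1 (mod 4ℤ₂). Then the ternary quadratic form x² + c·y² + c·z² is anisotropic over ℚ₂: if x, y, z ∈ ℚ₂ satisfy x² + c·y² + c·z² = 0, then x = y = z = 0. -/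
/-! Reduce modulo 4: the squares in `ℤ/4` are `0` and `1`, so `x² + y² + z² ≡ 0 (mod 4)` forces
`x, y, z` to be even, and since `c ≡ 1 (mod 4)` the same holds for `x² + c·y² + c·z²`. Hence a
solution in `ℤ₂` has no unit coordinate. A nonzero solution in `ℚ₂`, divided by a coordinate of
largest norm, would be a solution in `ℤ₂` with a coordinate equal to `1`. -/

theorem ZMod.sq_eq_zero_of_sq_add_sq_add_sq_eq_zero_four :
    ∀ u v w : ZMod 4, u ^ 2 + v ^ 2 + w ^ 2 = 0 → u ^ 2 = 0 ∧ v ^ 2 = 0 ∧ w ^ 2 = 0 := by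
  decide

theorem PadicInt.toZModPow_eq_one_of_dvd_sub_one {p : ℕ} [Fact p.Prime] {n : ℕ} {c : ℤ_[p]}
    (hc : (p : ℤ_[p]) ^ n ∣ c - 1) : toZModPow n c = 1 := by
  rw [← sub_eq_zero, ← map_one (toZModPow n), ← map_sub, ← RingHom.mem_ker, ker_toZModPow]
  exact Ideal.mem_span_singleton.mpr hc

theorem PadicInt.norm_lt_one_of_sq_add_mul_sq_add_mul_sq_eq_zero {c a b d : ℤ_[2]}
    (hc : (4 : ℤ_[2]) ∣ c - 1) (h : a ^ 2 + c * b ^ 2 + c * d ^ 2 = 0) :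
    ‖a‖ < 1 ∧ ‖b‖ < 1 ∧ ‖d‖ < 1 := by
  have : Fact (1 < 2 ^ 2) := ⟨by norm_num⟩
  have hc1 : toZModPow 2 c = 1 := toZModPow_eq_one_of_dvd_sub_one (by norm_num [hc])
  have hsum : toZModPow 2 a ^ 2 + toZModPow 2 b ^ 2 + toZModPow 2 d ^ 2 = 0 := by
    simpa [hc1] using congrArg (toZModPow 2) h
  have not_isUnit {e : ℤ_[2]} (he : toZModPow 2 e ^ 2 = 0) : ‖e‖ < 1 :=
    not_isUnit_iff.mp fun hu => not_isUnit_zero (he ▸ (hu.map (toZModPow 2)).pow 2)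
  obtain ⟨ha, hb, hd⟩ := ZMod.sq_eq_zero_of_sq_add_sq_add_sq_eq_zero_four _ _ _ hsum
  exact ⟨not_isUnit ha, not_isUnit hb, not_isUnit hd⟩

theorem Padic.norm_lt_of_sq_add_mul_sq_add_mul_sq_eq_zero {c : ℤ_[2]}
    (hc : (4 : ℤ_[2]) ∣ c - 1) {x y z w : ℚ_[2]} (hw : w ≠ 0)
    (hx : ‖x‖ ≤ ‖w‖) (hy : ‖y‖ ≤ ‖w‖) (hz : ‖z‖ ≤ ‖w‖)
    (h : x ^ 2 + (c : ℚ_[2]) * y ^ 2 + (c : ℚ_[2]) * z ^ 2 = 0) :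
    ‖x‖ < ‖w‖ ∧ ‖y‖ < ‖w‖ ∧ ‖z‖ < ‖w‖ := by
  have hwpos : 0 < ‖w‖ := norm_pos_iff.mpr hw
  have norm_div_le {v : ℚ_[2]} (hv : ‖v‖ ≤ ‖w‖) : ‖v / w‖ ≤ 1 := by
    rwa [norm_div, div_le_one hwpos]
  have hscaled : (x / w) ^ 2 + (c : ℚ_[2]) * (y / w) ^ 2 + (c : ℚ_[2]) * (z / w) ^ 2 = 0 := by
    calc _ = (x ^ 2 + (c : ℚ_[2]) * y ^ 2 + (c : ℚ_[2]) * z ^ 2) / w ^ 2 := by ring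
      _ = 0 := by rw [h, zero_div]
  have : ‖x / w‖ < 1 ∧ ‖y / w‖ < 1 ∧ ‖z / w‖ < 1 :=
    PadicInt.norm_lt_one_of_sq_add_mul_sq_add_mul_sq_eq_zero (a := ⟨x / w, norm_div_le hx⟩)
      (b := ⟨y / w, norm_div_le hy⟩) (d := ⟨z / w, norm_div_le hz⟩) hc (Subtype.ext hscaled)
  simpa only [norm_div, div_lt_one hwpos] using this

theorem exists_norm_eq_max_max {E : Type*} [Norm E] (x y z : E) :
    ∃ w : E, ‖w‖ = max ‖x‖ (max ‖y‖ ‖z‖) := by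
  rcases max_choice ‖x‖ (max ‖y‖ ‖z‖) with hx | hyz
  · exact ⟨x, hx.symm⟩
  rcases max_choice ‖y‖ ‖z‖ with hy | hz
  · exact ⟨y, (hyz.trans hy).symm⟩
  · exact ⟨z, (hyz.trans hz).symm⟩

/-- Let `c` be a unit of `ℤ₂` with `c ≡ 1 (mod 4ℤ₂)`. Then the ternary form
`x² + c·y² + c·z²` is anisotropic over `ℚ₂`: if `x, y, z ∈ ℚ₂` satisfy
`x² + c·y² + c·z² = 0`, then `x = y = z = 0`. -/
theorem anisotropic_unit_ternary_Q2 (c : ℤ_[2]ˣ) (hc : (4 : ℤ_[2]) ∣ ((c : ℤ_[2]) - 1))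
    (x y z : ℚ_[2])
    (h : x ^ 2 + ((c : ℤ_[2]) : ℚ_[2]) * y ^ 2 + ((c : ℤ_[2]) : ℚ_[2]) * z ^ 2 = 0) :
    x = 0 ∧ y = 0 ∧ z = 0 := by
  obtain ⟨w, hw⟩ := exists_norm_eq_max_max x y z
  by_contra hne
  have hw0 : w ≠ 0 := by
    rintro rfl
    exact hne (by simpa only [norm_zero, max_le_iff, norm_le_zero_iff] using hw.ge)
  obtain ⟨hx, hy, hz⟩ := Padic.norm_lt_of_sq_add_mul_sq_add_mul_sq_eq_zero hc hw0
    (hw ▸ le_max_left ..) (hw ▸ (le_max_left ..).trans (le_max_right ..))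
    (hw ▸ (le_max_right ..).trans (le_max_right ..)) h
  rw [hw] at hx hy hz
  exact lt_irrefl _ (max_lt hx (max_lt hy hz))
end

section
/- The set of values of the binary quadratic form 2x² + 2xy + 2y² on the ring ℤ₂ of 2-adic integers is {2x² + 2xy + 2y² : x, y ∈ ℤ₂} = {t ∈ ℤ₂ : ord₂(t) is odd} ∪ {0}, where ord₂(t) denotes the 2-adic valuation of a nonzero t ∈ ℤ₂. -/
/-!
Over `ℤ₂` the form `x² + xy + y²` is anisotropic modulo `2` (it has no nontrivial zero in
`𝔽₂`), so it takes unit values as soon as `x` is a unit. Scaling out the common power of `2`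
shows that its nonzero values have even valuation, hence `2(x² + xy + y²)` has odd valuation.
Conversely Hensel's lemma solves `a² + a + 1 = u` for every unit `u`, since modulo `2` the
polynomial `X² + X + 1 - u` is `X² + X` with the simple root `0`; then
`2²ᵐ⁺¹ u = 2((2ᵐa)² + (2ᵐa)·2ᵐ + (2ᵐ)²)`.
-/

open Polynomial

namespace PadicInt

section

variable {p : ℕ} [Fact p.Prime]

theorem isUnit_iff_toZMod_ne_zero {x : ℤ_[p]} : IsUnit x ↔ toZMod x ≠ 0 := by
  rw [Ne, ← RingHom.mem_ker, ker_toZMod, IsLocalRing.mem_maximalIdeal, mem_nonunits_iff,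
    not_not]

theorem valuation_eq_zero_of_isUnit {u : ℤ_[p]} (hu : IsUnit u) : u.valuation = 0 := by
  obtain ⟨v, hv⟩ := hu.exists_right_inv
  have := valuation_mul hu.ne_zero (right_ne_zero_of_mul_eq_one hv)
  rw [hv, valuation_one] at this
  omega

theorem p_pow_valuation_dvd_of_norm_le {x y : ℤ_[p]} (hx : x ≠ 0) (h : ‖y‖ ≤ ‖x‖) :
    (p : ℤ_[p]) ^ x.valuation ∣ y := by
  rwa [← Ideal.mem_span_singleton, ← norm_le_pow_iff_mem_span_pow,
    ← norm_eq_zpow_neg_valuation hx]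

end

theorem isUnit_sq_add_mul_add_sq {a b : ℤ_[2]} (ha : IsUnit a) :
    IsUnit (a ^ 2 + a * b + b ^ 2) := by
  rw [isUnit_iff_toZMod_ne_zero] at ha ⊢
  simp only [map_add, map_mul, map_pow]
  generalize toZMod a = A at ha
  generalize toZMod b = B
  revert A B
  decide

theorem even_valuation_sq_add_mul_add_sq_of_norm_le {x y : ℤ_[2]} (h : ‖y‖ ≤ ‖x‖) :
    Even (x ^ 2 + x * y + y ^ 2).valuation := by
  rcases eq_or_ne x 0 with rfl | hx
  · obtain rfl : y = 0 := by simpa using h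
    simp
  obtain ⟨c, hc⟩ := p_pow_valuation_dvd_of_norm_le hx h
  have hx' := unitCoeff_spec hx
  set n := x.valuation
  set u : ℤ_[2] := (unitCoeff hx : ℤ_[2])
  have hQ : x ^ 2 + x * y + y ^ 2 = ((2 : ℕ) : ℤ_[2]) ^ (2 * n) * (u ^ 2 + u * c + c ^ 2) := by
    rw [hc, hx']
    ring
  have hunit := isUnit_sq_add_mul_add_sq (b := c) (unitCoeff hx).isUnit
  rw [hQ, valuation_p_pow_mul _ _ hunit.ne_zero, valuation_eq_zero_of_isUnit hunit]
  exact ⟨n, by ring⟩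

theorem even_valuation_sq_add_mul_add_sq (x y : ℤ_[2]) :
    Even (x ^ 2 + x * y + y ^ 2).valuation := by
  rcases le_total ‖y‖ ‖x‖ with h | h
  · exact even_valuation_sq_add_mul_add_sq_of_norm_le h
  · rw [show x ^ 2 + x * y + y ^ 2 = y ^ 2 + y * x + x ^ 2 by ring]
    exact even_valuation_sq_add_mul_add_sq_of_norm_le h

theorem exists_sq_add_self_add_one_eq_of_isUnit {u : ℤ_[2]} (hu : IsUnit u) :
    ∃ a : ℤ_[2], a ^ 2 + a + 1 = u := by
  have h1u : ‖(1 : ℤ_[2]) - u‖ < 1 := by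
    rw [← not_isUnit_iff, isUnit_iff_toZMod_ne_zero, not_not, map_sub, map_one]
    rw [isUnit_iff_toZMod_ne_zero] at hu
    generalize toZMod u = U at hu
    revert U
    decide
  have hF : ‖(X ^ 2 + X + C (1 - u) : ℤ_[2][X]).aeval (0 : ℤ_[2])‖ <
      ‖(derivative (X ^ 2 + X + C (1 - u) : ℤ_[2][X])).aeval (0 : ℤ_[2])‖ ^ 2 := by
    simpa using h1u
  obtain ⟨a, ha, -⟩ := hensels_lemma hF
  exact ⟨a, by simpa [sub_eq_zero, add_sub, sub_eq_iff_eq_add'] using ha⟩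

end PadicInt

open PadicInt in
/-- The set of values of `2x² + 2xy + 2y²` on `ℤ₂` equals the set of 2-adic integers of
odd 2-adic valuation together with `0`. -/
theorem values_binary_form_Z2 :
    {t : ℤ_[2] | ∃ x y : ℤ_[2], t = 2 * x ^ 2 + 2 * x * y + 2 * y ^ 2} =
      {t : ℤ_[2] | t ≠ 0 ∧ Odd t.valuation} ∪ {0} := by
  ext t
  simp only [Set.mem_ofPred_eq, Set.mem_union, Set.mem_singleton_iff]
  constructor
  · rintro ⟨x, y, rfl⟩
    rw [show 2 * x ^ 2 + 2 * x * y + 2 * y ^ 2 =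
        ((2 : ℕ) : ℤ_[2]) ^ 1 * (x ^ 2 + x * y + y ^ 2) by push_cast; ring]
    rcases eq_or_ne (x ^ 2 + x * y + y ^ 2) 0 with h0 | h0
    · simp [h0]
    · rw [valuation_p_pow_mul 1 _ h0]
      exact Or.inl ⟨mul_ne_zero (by simp) h0, (even_valuation_sq_add_mul_add_sq x y).one_add⟩
  · rintro (⟨ht, m, hm⟩ | rfl)
    · obtain ⟨a, ha⟩ := exists_sq_add_self_add_one_eq_of_isUnit (unitCoeff ht).isUnit
      refine ⟨2 ^ m * a, 2 ^ m, ?_⟩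
      rw [unitCoeff_spec ht, hm, ← ha]
      push_cast
      ring
    · exact ⟨0, 0, by ring⟩
end

section
/- Let a and b be positive integers with gcd(a,b) = 1 such that a² + b² = pʳ for some prime p ≡ 1 (mod 4) and positive integer r, or a² + b² = 2pᵏ for some prime p ≡ 1 (mod 4) and non-negative integer k. Then the ternary quadratic form x² + (a² + b²)y² + (a² + b²)z² is anisotropic over ℚ₂ (its only nontrivial zero over ℚ₂ is x = y = z = 0 only), while for every odd prime q it is isotropic over ℚ_q, i.e., there exist x, y, z ∈ ℚ_q, not all zero, with x² + (a² + b²)y² + (a² + b²)z² = 0. -/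
/-!
Reduce a nontrivial 2-adic zero of `x² + m y² + m z²` to a primitive one in `ℤ₂` and read it
modulo 16: since `m = a² + b²` is `pʳ` or `2pᵏ` with `p ≡ 1 (mod 4)`, we have `m ≡ 1 (mod 4)` or
`m ≡ 2 (mod 8)`, and for such `m` the form has no primitive zero modulo 16.
At an odd prime `q`, Hensel's lemma lifts a representation `-1 = c² + d²` over `𝔽_q` to `ℤ_q`, and
the two-squares identity `(a² + b²)(c² + d²) = (ca - db)² + (cb + da)²` turns it into the zero
`(a² + b², ca - db, cb + da)`.
-/

namespace Padic

variable {p : ℕ} [Fact p.Prime]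

theorem exists_primitive_multiple {ι : Type*} [Finite ι] {v : ι → ℚ_[p]} (hv : v ≠ 0) :
    ∃ (w : ℚ_[p]) (V : ι → ℤ_[p]), (∀ i, (V i : ℚ_[p]) = w * v i) ∧ ∃ i, IsUnit (V i) := by
  obtain ⟨i₀, -⟩ := Function.ne_iff.1 hv
  have : Nonempty ι := ⟨i₀⟩
  obtain ⟨j, hj⟩ := Finite.exists_max (fun i => ‖v i‖)
  have hvj : v j ≠ 0 := by
    intro h
    exact hv (funext fun i => norm_le_zero_iff.1 (by simpa [h] using hj i))
  have hle : ∀ i, ‖(v j)⁻¹ * v i‖ ≤ 1 := fun i => by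
    rw [norm_mul, norm_inv, inv_mul_le_one₀ (norm_pos_iff.2 hvj)]
    exact hj i
  refine ⟨(v j)⁻¹, fun i => (⟨_, hle i⟩ : ℤ_[p]), fun i => rfl, j, ?_⟩
  refine PadicInt.isUnit_iff.2 ?_
  change ‖(v j)⁻¹ * v j‖ = 1
  rw [inv_mul_cancel₀ hvj, norm_one]

theorem anisotropic_weightedSumSquares_of_toZModPow {ι : Type*} [Fintype ι] (α : ι → ℤ_[p])
    (n : ℕ) (h : ∀ s : ι → ZMod (p ^ n), (∃ i, IsUnit (s i)) →
      ∑ i, PadicInt.toZModPow n (α i) * s i ^ 2 ≠ 0) :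
    (QuadraticMap.weightedSumSquares ℚ_[p] fun i => (α i : ℚ_[p])).Anisotropic := by
  intro v hv
  by_contra hv0
  obtain ⟨w, V, hV, i, hi⟩ := exists_primitive_multiple hv0
  have hV0 : ∑ i, α i * V i ^ 2 = 0 := by
    have hscale : ((∑ i, α i * V i ^ 2 : ℤ_[p]) : ℚ_[p]) =
        w ^ 2 * QuadraticMap.weightedSumSquares ℚ_[p] (fun i => (α i : ℚ_[p])) v := by
      simp only [PadicInt.coe_sum, PadicInt.coe_mul, PadicInt.coe_pow, hV,
        QuadraticMap.weightedSumSquares_apply, smul_eq_mul, Finset.mul_sum]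
      exact Finset.sum_congr rfl fun i _ => by ring
    rwa [hv, mul_zero, PadicInt.coe_eq_zero] at hscale
  refine h (fun i => PadicInt.toZModPow n (V i)) ⟨i, hi.map _⟩ ?_
  simpa using congrArg (PadicInt.toZModPow n) hV0

end Padic

/- Modulo 8 would not suffice: `2² + 2·1² + 2·1² ≡ 0 (mod 8)`. -/
theorem ZMod.sq_add_mul_sq_add_mul_sq_ne_zero_of_isUnit : ∀ m s t u : ZMod 16,
    (m.val % 4 = 1 ∨ m.val % 8 = 2) → (IsUnit s ∨ IsUnit t ∨ IsUnit u) →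
    s ^ 2 + m * t ^ 2 + m * u ^ 2 ≠ 0 := by
  decide +kernel

theorem Padic.anisotropic_weightedSumSquares_two {m : ℕ} (hm : m % 4 = 1 ∨ m % 8 = 2) :
    (QuadraticMap.weightedSumSquares ℚ_[2] ![(1 : ℚ_[2]), m, m]).Anisotropic := by
  have key := anisotropic_weightedSumSquares_of_toZModPow ![1, (m : ℤ_[2]), m] 4 ?_
  · convert key using 2
    ext i
    fin_cases i <;> simp
  · rintro s ⟨i, hi⟩
    have hm16 : (m : ZMod 16).val % 4 = 1 ∨ (m : ZMod 16).val % 8 = 2 := by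
      rw [ZMod.val_natCast]
      omega
    have hs : IsUnit (s 0) ∨ IsUnit (s 1) ∨ IsUnit (s 2) := by
      fin_cases i <;> simp_all
    simpa [Fin.sum_univ_three] using
      ZMod.sq_add_mul_sq_add_mul_sq_ne_zero_of_isUnit m (s 0) (s 1) (s 2) hm16 hs

open Polynomial IsLocalRing

theorem HenselianRing.isSquare_of_sub_sq_mem {R : Type*} [CommRing R] {I : Ideal R}
    [HenselianRing R I] {u c : R} (hu : u - c ^ 2 ∈ I)
    (hc : IsUnit (Ideal.Quotient.mk I (2 * c))) : IsSquare u := by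
  have hmonic : (X ^ 2 - C u).Monic := monic_X_pow_sub_C u two_ne_zero
  have hderiv : (X ^ 2 - C u).derivative.eval c = 2 * c := by simp; ring
  obtain ⟨a, ha, -⟩ := HenselianRing.is_henselian (X ^ 2 - C u) hmonic c
    (by simpa using I.neg_mem_iff.2 hu) (by rwa [hderiv])
  have ha' : a ^ 2 - u = 0 := by simpa using ha.eq_zero
  exact ⟨a, by linear_combination -ha'⟩

namespace PadicInt

variable {p : ℕ} [Fact p.Prime]

theorem isUnit_of_toZMod_ne_zero {x : ℤ_[p]} (hx : toZMod x ≠ 0) : IsUnit x := by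
  by_contra h
  exact hx (by rwa [← RingHom.mem_ker, ker_toZMod, mem_maximalIdeal, mem_nonunits_iff])

theorem isSquare_of_toZMod_eq_sq (hp : p ≠ 2) {u c : ℤ_[p]} (hc : toZMod c ≠ 0)
    (h : toZMod u = toZMod c ^ 2) : IsSquare u := by
  have h2 : (2 : ZMod p) ≠ 0 := Ring.two_ne_zero (by rwa [ZMod.ringChar_zmod_n])
  refine HenselianRing.isSquare_of_sub_sq_mem (I := maximalIdeal ℤ_[p]) (c := c) ?_
    ((isUnit_of_toZMod_ne_zero ?_).map _)
  · rw [← ker_toZMod, RingHom.mem_ker, map_sub, map_pow, h, sub_self]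
  · rw [map_mul, map_ofNat]
    exact mul_ne_zero h2 hc

theorem exists_sq_add_sq_of_isUnit (hp : p ≠ 2) {u : ℤ_[p]} (hu : IsUnit u) :
    ∃ c d : ℤ_[p], c ^ 2 + d ^ 2 = u := by
  obtain ⟨c₀, d₀, h₀⟩ := ZMod.sq_add_sq p (toZMod u)
  wlog hc₀ : c₀ ≠ 0 generalizing c₀ d₀
  · have hd₀ : d₀ ≠ 0 := by
      rintro rfl
      refine (hu.map toZMod).ne_zero ?_
      rw [← h₀, not_not.1 hc₀]
      ring
    obtain ⟨c, d, h⟩ := this d₀ c₀ (by rw [← h₀, add_comm]) hd₀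
    exact ⟨d, c, by rw [← h, add_comm]⟩
  obtain ⟨c, rfl⟩ := ZMod.ringHom_surjective toZMod c₀
  obtain ⟨d, rfl⟩ := ZMod.ringHom_surjective toZMod d₀
  obtain ⟨e, he⟩ := isSquare_of_toZMod_eq_sq hp hc₀ (u := u - d ^ 2)
    (by rw [map_sub, map_pow, ← h₀, add_sub_cancel_right])
  exact ⟨e, d, by rw [sq, ← he, sub_add_cancel]⟩

end PadicInt

theorem isotropic_of_sq_add_sq_eq_neg_one {R : Type*} [CommRing R] {a b c d : R}
    (hcd : c ^ 2 + d ^ 2 = -1) (hab : a ^ 2 + b ^ 2 ≠ 0) :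
    ∃ x y z : R, ¬(x = 0 ∧ y = 0 ∧ z = 0) ∧
      x ^ 2 + (a ^ 2 + b ^ 2) * y ^ 2 + (a ^ 2 + b ^ 2) * z ^ 2 = 0 :=
  ⟨a ^ 2 + b ^ 2, c * a - d * b, c * b + d * a, fun h => hab h.1, by
    linear_combination (a ^ 2 + b ^ 2) ^ 2 * hcd⟩

theorem anisotropic_at_two_isotropic_at_odd_general (a b : ℕ)
    (hform : (∃ p r : ℕ, p.Prime ∧ p % 4 = 1 ∧ 0 < r ∧ a ^ 2 + b ^ 2 = p ^ r) ∨
      (∃ p k : ℕ, p.Prime ∧ p % 4 = 1 ∧ a ^ 2 + b ^ 2 = 2 * p ^ k)) :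
    (∀ x y z : ℚ_[2],
        x ^ 2 + ((a ^ 2 + b ^ 2 : ℕ) : ℚ_[2]) * y ^ 2 +
          ((a ^ 2 + b ^ 2 : ℕ) : ℚ_[2]) * z ^ 2 = 0 → x = 0 ∧ y = 0 ∧ z = 0) ∧
    (∀ (q : ℕ) [Fact q.Prime], Odd q →
      ∃ x y z : ℚ_[q], ¬(x = 0 ∧ y = 0 ∧ z = 0) ∧
        x ^ 2 + ((a ^ 2 + b ^ 2 : ℕ) : ℚ_[q]) * y ^ 2 +
          ((a ^ 2 + b ^ 2 : ℕ) : ℚ_[q]) * z ^ 2 = 0) := by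
  have hm : (a ^ 2 + b ^ 2) % 4 = 1 ∨ (a ^ 2 + b ^ 2) % 8 = 2 := by
    rcases hform with ⟨p, r, -, hp, -, hpr⟩ | ⟨p, k, -, hp, hpk⟩
    · exact Or.inl (by simp [hpr, Nat.pow_mod, hp])
    · have : p ^ k % 4 = 1 := by simp [Nat.pow_mod, hp]
      omega
  refine ⟨fun x y z h => ?_, fun q _ hq => ?_⟩
  · have hv := Padic.anisotropic_weightedSumSquares_two hm ![x, y, z]
      (by simpa [Fin.sum_univ_three, ← sq] using h)
    simpa [funext_iff, Fin.forall_fin_succ] using hv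
  · obtain ⟨c, d, hcd⟩ := PadicInt.exists_sq_add_sq_of_isUnit (p := q)
      (by rintro rfl; exact absurd hq (by decide))
      isUnit_one.neg
    have hm0 : ((a ^ 2 + b ^ 2 : ℕ) : ℚ_[q]) ≠ 0 := Nat.cast_ne_zero.2 (by omega)
    push_cast at hm0 ⊢
    exact isotropic_of_sq_add_sq_eq_neg_one (c := c) (d := d) (by simpa using congrArg ((↑) : ℤ_[q] → ℚ_[q]) hcd) hm0

/-- Let `a, b` be coprime positive integers with `a² + b² = pʳ` for a prime `p ≡ 1 (mod 4)`
and positive integer `r`, or `a² + b² = 2pᵏ` for a prime `p ≡ 1 (mod 4)` and non-negative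
integer `k`. Then the form `x² + (a² + b²)y² + (a² + b²)z²` is anisotropic over `ℚ₂`,
while for every odd prime `q` it is isotropic over `ℚ_q`. -/
theorem anisotropic_at_two_isotropic_at_odd (a b : ℕ) (ha : 0 < a) (hb : 0 < b)
    (hab : Nat.gcd a b = 1)
    (hform : (∃ p r : ℕ, p.Prime ∧ p % 4 = 1 ∧ 0 < r ∧ a ^ 2 + b ^ 2 = p ^ r) ∨
      (∃ p k : ℕ, p.Prime ∧ p % 4 = 1 ∧ a ^ 2 + b ^ 2 = 2 * p ^ k)) :
    (∀ x y z : ℚ_[2],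
        x ^ 2 + ((a ^ 2 + b ^ 2 : ℕ) : ℚ_[2]) * y ^ 2 +
          ((a ^ 2 + b ^ 2 : ℕ) : ℚ_[2]) * z ^ 2 = 0 → x = 0 ∧ y = 0 ∧ z = 0) ∧
    (∀ (q : ℕ) [Fact q.Prime], Odd q →
      ∃ x y z : ℚ_[q], ¬(x = 0 ∧ y = 0 ∧ z = 0) ∧
        x ^ 2 + ((a ^ 2 + b ^ 2 : ℕ) : ℚ_[q]) * y ^ 2 +
          ((a ^ 2 + b ^ 2 : ℕ) : ℚ_[q]) * z ^ 2 = 0) :=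
  anisotropic_at_two_isotropic_at_odd_general a b hform
end
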